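/- For any T0 space X, S_X = S_{DX}, where DX is X retopologized with the directed-open topology D(X). Consequently, S_X is topological if and only if DX is a continuous space. -/
import Mathlib


namespace Conv

variable {X : Type}

/-- A directed preorder (index of a net), given as an explicit relation. -/
def DirIdx {I : Type} (r : I → I → Prop) : Prop :=
  Nonempty I ∧ (∀ i, r i i) ∧ (∀ a b c : I, r a b → r b c → r a c) ∧
    ∀ a b : I, ∃ c, r a c ∧ r b c

/-- Specialization order relative to a family `T` of "open" sets. -/
def sle (T : Set (Set X)) (x y : X) : Prop := ∀ U ∈ T, x ∈ U → y ∈ U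

/-- Upper closure of a set w.r.t. the specialization order of `T`. -/
def upset (T : Set (Set X)) (A : Set X) : Set X := {z | ∃ a ∈ A, sle T a z}

/-- `D` is a (nonempty) directed subset w.r.t. the specialization order of `T`. -/
def IsDirSet (T : Set (Set X)) (D : Set X) : Prop := D.Nonempty ∧ DirectedOn (sle T) D

/-- A subset `D` (viewed as a monotone net) converges to `x` w.r.t. `T`. -/
def DConv (T : Set (Set X)) (D : Set X) (x : X) : Prop :=
  ∀ U ∈ T, x ∈ U → (D ∩ U).Nonempty

/-- `U` is directed-open w.r.t. `T`. -/
def DirOpen (T : Set (Set X)) (U : Set X) : Prop :=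
  ∀ D x, IsDirSet T D → DConv T D x → x ∈ U → (D ∩ U).Nonempty

/-- The family of directed-open sets. -/
def DTop (T : Set (Set X)) : Set (Set X) := {U | DirOpen T U}

/-- The family of open sets of a topological space. -/
def opens (X : Type) [TopologicalSpace X] : Set (Set X) := {U | IsOpen U}

/-- Every directed-open set belongs to `T`. -/
def DirT (T : Set (Set X)) : Prop := ∀ U, DirOpen T U → U ∈ T

/-- A directed space: every directed-open set is open. -/
def IsDirectedSpace (X : Type) [TopologicalSpace X] : Prop := DirT (opens X)

/-- A net is eventually in `U`. -/
def EvIn {I : Type} (r : I → I → Prop) (xi : I → X) (U : Set X) : Prop :=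
  ∃ k, ∀ i, r k i → xi i ∈ U

/-- `y` is an eventual lower bound of the net `xi`. -/
def EvLB (T : Set (Set X)) {I : Type} (r : I → I → Prop) (xi : I → X) (y : X) : Prop :=
  ∃ k, ∀ i, r k i → sle T y (xi i)

/-- Topological convergence of a net w.r.t. the family `T` of open sets. -/
def NConv (T : Set (Set X)) {I : Type} (r : I → I → Prop) (xi : I → X) (x : X) : Prop :=
  ∀ U ∈ T, x ∈ U → EvIn r xi U

/-- `((x_i), x) ∈ S_X`: some directed set of eventual lower bounds converges to `x`. -/
def SConv (T : Set (Set X)) {I : Type} (r : I → I → Prop) (xi : I → X) (x : X) : Prop :=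
  ∃ D : Set X, IsDirSet T D ∧ (∀ d ∈ D, EvLB T r xi d) ∧ DConv T D x

/-- `U` is open in the topology determined by `S_X`. -/
def SOpen (T : Set (Set X)) (U : Set X) : Prop :=
  ∀ (I : Type) (r : I → I → Prop), DirIdx r → ∀ (xi : I → X) (x : X),
    SConv T r xi x → x ∈ U → EvIn r xi U

/-- `y ≪_d x`. -/
def WayBelow (T : Set (Set X)) (y x : X) : Prop :=
  ∀ D : Set X, IsDirSet T D → DConv T D x → ∃ d ∈ D, sle T y d

/-- A continuous space (relative to the family `T`). -/
def IsContinuousT (T : Set (Set X)) : Prop :=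
  DirT T ∧ ∀ x : X, IsDirSet T {y | WayBelow T y x} ∧ DConv T {y | WayBelow T y x} x

def IsContinuousSpace (X : Type) [TopologicalSpace X] : Prop := IsContinuousT (opens X)

/-- `G ≪_d H` for subsets. -/
def SWayBelow (T : Set (Set X)) (G H : Set X) : Prop :=
  ∀ (D : Set X) (x : X), IsDirSet T D → DConv T D x → x ∈ H → (D ∩ upset T G).Nonempty

/-- A directed family of finite sets (ordered by reverse inclusion of upper closures). -/
def IsDirFam (T : Set (Set X)) (F : Set (Set X)) : Prop :=
  F.Nonempty ∧ (∀ A ∈ F, A.Finite) ∧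
    ∀ A ∈ F, ∀ B ∈ F, ∃ C ∈ F, upset T C ⊆ upset T A ∧ upset T C ⊆ upset T B

/-- Convergence of a family of finite sets to `x`. -/
def FamConv (T : Set (Set X)) (F : Set (Set X)) (x : X) : Prop :=
  ∀ U ∈ T, x ∈ U → ∃ A ∈ F, upset T A ⊆ U

/-- `fin_d(x)`. -/
def finD (T : Set (Set X)) (x : X) : Set (Set X) := {A | A.Finite ∧ SWayBelow T A {x}}

def IsQuasicontinuousT (T : Set (Set X)) : Prop :=
  DirT T ∧ ∀ x : X, IsDirFam T (finD T x) ∧ FamConv T (finD T x) x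

def IsQuasicontinuousSpace (X : Type) [TopologicalSpace X] : Prop :=
  IsQuasicontinuousT (opens X)

/-- `A` is a quasi eventual lower bound of the net `xi`. -/
def QEvLB (T : Set (Set X)) {I : Type} (r : I → I → Prop) (xi : I → X) (A : Set X) : Prop :=
  A.Finite ∧ ∃ k, ∀ i, r k i → xi i ∈ upset T A

/-- `((x_i), x) ∈ S*_X`. -/
def QSConv (T : Set (Set X)) {I : Type} (r : I → I → Prop) (xi : I → X) (x : X) : Prop :=
  ∃ F : Set (Set X), IsDirFam T F ∧ (∀ A ∈ F, QEvLB T r xi A) ∧ FamConv T F x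

/-- `U` is open in the topology determined by `S*_X`. -/
def QSOpen (T : Set (Set X)) (U : Set X) : Prop :=
  ∀ (I : Type) (r : I → I → Prop), DirIdx r → ∀ (xi : I → X) (x : X),
    QSConv T r xi x → x ∈ U → EvIn r xi U

/-- `x ≡ liminf x_i`. -/
def IsLiminf (T : Set (Set X)) {I : Type} (r : I → I → Prop) (xi : I → X) (x : X) : Prop :=
  (∀ y, EvLB T r xi y → sle T y x) ∧
  (∀ z, (∀ y, EvLB T r xi y → sle T y z) → sle T x z) ∧
  SConv T r xi x

/-- `f : (J,s) → (I,r)` is a subnet map: monotone and cofinal, with directed domain. -/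
def Subnet {I J : Type} (r : I → I → Prop) (s : J → J → Prop) (f : J → I) : Prop :=
  DirIdx s ∧ (∀ a b, s a b → r (f a) (f b)) ∧ ∀ i, ∃ j, r i (f j)

/-- `z` is a cofinal lower bound of the net `xi`. -/
def CofLB (T : Set (Set X)) {I : Type} (r : I → I → Prop) (xi : I → X) (z : X) : Prop :=
  ∀ i, ∃ j, r i j ∧ sle T z (xi j)

/-- `((x_i), x) ∈ L_X`: every subnet has liminf `x`. -/
def LConv (T : Set (Set X)) {I : Type} (r : I → I → Prop) (xi : I → X) (x : X) : Prop :=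
  ∀ (J : Type) (s : J → J → Prop) (f : J → I), Subnet r s f →
    IsLiminf T s (fun j => xi (f j)) x

/-- `U` is open in the liminf topology `L(X)`. -/
def LOpen (T : Set (Set X)) (U : Set X) : Prop :=
  ∀ (I : Type) (r : I → I → Prop), DirIdx r → ∀ (xi : I → X) (x : X),
    LConv T r xi x → x ∈ U → EvIn r xi U

/-- `x ≡_q liminf x_i`. -/
def QLiminf (T : Set (Set X)) {I : Type} (r : I → I → Prop) (xi : I → X) (x : X) : Prop :=
  QSConv T r xi x ∧ ∀ y, EvLB T r xi y → sle T y x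

/-- `((x_i), x) ∈ L*_X`: every subnet quasi-liminf converges to `x`. -/
def QLConv (T : Set (Set X)) {I : Type} (r : I → I → Prop) (xi : I → X) (x : X) : Prop :=
  ∀ (J : Type) (s : J → J → Prop) (f : J → I), Subnet r s f →
    QLiminf T s (fun j => xi (f j)) x

/-- `U` is open in the quasi-liminf topology `L*(X)`. -/
def QLOpen (T : Set (Set X)) (U : Set X) : Prop :=
  ∀ (I : Type) (r : I → I → Prop), DirIdx r → ∀ (xi : I → X) (x : X),
    QLConv T r xi x → x ∈ U → EvIn r xi U

/-- The Lawson topology: generated by the opens of `X` and complements of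
principal upper sets. -/
def lawson (X : Type) [TopologicalSpace X] : Set (Set X) :=
  {U | (TopologicalSpace.generateFrom
      (opens X ∪ {V | ∃ y : X, V = {z : X | sle (opens X) y z}ᶜ})).IsOpen U}

section Helpers

variable {T : Set (Set X)}

lemma sle_refl' (T : Set (Set X)) (x : X) : sle T x x := fun _ _ h => h

lemma sle_trans' {x y z : X} (h1 : sle T x y) (h2 : sle T y z) : sle T x z :=
  fun U hU hx => h2 U hU (h1 U hU hx)

lemma mem_dtop {U : Set X} (hU : U ∈ T) : U ∈ DTop T := fun _D _x _ hc hx => hc U hU hx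

lemma isdir_singleton (T : Set (Set X)) (y : X) : IsDirSet T {y} :=
  ⟨⟨y, rfl⟩, fun a ha b hb => ⟨y, rfl, by
    simp only [Set.mem_singleton_iff] at ha hb
    subst ha; subst hb; exact ⟨fun _ _ h => h, fun _ _ h => h⟩⟩⟩

lemma sle_dtop {x y : X} : sle (DTop T) x y ↔ sle T x y := by
  refine ⟨fun h U hU hx => h U (mem_dtop hU) hx, fun h U hU hx => ?_⟩
  obtain ⟨z, hz1, hz2⟩ :=
    hU {y} x (isdir_singleton T y) (fun V hV hxV => ⟨y, rfl, h V hV hxV⟩) hx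
  simp only [Set.mem_singleton_iff] at hz1
  subst hz1; exact hz2

lemma dconv_dtop {D : Set X} {x : X} (hD : IsDirSet T D) :
    DConv (DTop T) D x ↔ DConv T D x :=
  ⟨fun h U hU hx => h U (mem_dtop hU) hx, fun h U hU hx => hU D x hD h hx⟩

lemma isdir_dtop {D : Set X} : IsDirSet (DTop T) D ↔ IsDirSet T D := by
  unfold IsDirSet DirectedOn
  simp only [sle_dtop]

lemma evlb_dtop {I : Type} {r : I → I → Prop} {xi : I → X} {d : X} :
    EvLB (DTop T) r xi d ↔ EvLB T r xi d := by
  unfold EvLB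
  simp only [sle_dtop]

lemma sconv_dtop {I : Type} {r : I → I → Prop} {xi : I → X} {x : X} :
    SConv T r xi x ↔ SConv (DTop T) r xi x := by
  constructor
  · rintro ⟨D, hD, hlb, hc⟩
    exact ⟨D, isdir_dtop.mpr hD, fun d hd => evlb_dtop.mpr (hlb d hd), (dconv_dtop hD).mpr hc⟩
  · rintro ⟨D, hD, hlb, hc⟩
    have hD' := isdir_dtop.mp hD
    exact ⟨D, hD', fun d hd => evlb_dtop.mp (hlb d hd), (dconv_dtop hD').mp hc⟩

lemma dtop_upper {U : Set X} (hU : U ∈ DTop T) {d z : X} (hd : d ∈ U) (h : sle T d z) :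
    z ∈ U := by
  obtain ⟨w, hw1, hw2⟩ :=
    hU {z} d (isdir_singleton T z) (fun V hV hdV => ⟨z, rfl, h V hV hdV⟩) hd
  simp only [Set.mem_singleton_iff] at hw1
  subst hw1; exact hw2

lemma univ_dtop : (Set.univ : Set X) ∈ DTop T := by
  intro D x hD _ _
  obtain ⟨d, hd⟩ := hD.1
  exact ⟨d, hd, trivial⟩

lemma inter_dtop {U V : Set X} (hU : U ∈ DTop T) (hV : V ∈ DTop T) : U ∩ V ∈ DTop T := by
  intro D x hD hc hx
  obtain ⟨d1, hd1D, hd1U⟩ := hU D x hD hc hx.1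
  obtain ⟨d2, hd2D, hd2V⟩ := hV D x hD hc hx.2
  obtain ⟨d, hdD, h1, h2⟩ := hD.2 d1 hd1D d2 hd2D
  exact ⟨d, hdD, dtop_upper hU hd1U h1, dtop_upper hV hd2V h2⟩

lemma dirt_dtop : DirT (DTop T) := by
  intro U hU D x hD hc hx
  exact hU D x (isdir_dtop.mpr hD) ((dconv_dtop hD).mpr hc) hx

lemma sopen_iff {U : Set X} : SOpen T U ↔ U ∈ DTop T := by
  constructor
  · intro h D x hD hc hx
    have hne : Nonempty D := hD.1.to_subtype
    have hdir : DirIdx (fun a b : D => sle T a.1 b.1) := by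
      refine ⟨hne, fun i => sle_refl' T i.1, fun a b c hab hbc => sle_trans' hab hbc,
        fun a b => ?_⟩
      obtain ⟨c, hc', h1, h2⟩ := hD.2 a.1 a.2 b.1 b.2
      exact ⟨⟨c, hc'⟩, h1, h2⟩
    have hsc : SConv T (fun a b : D => sle T a.1 b.1) (fun a => a.1) x :=
      ⟨D, hD, fun d hd => ⟨⟨d, hd⟩, fun i hi => hi⟩, hc⟩
    obtain ⟨k, hk⟩ := h D _ hdir _ x hsc hx
    exact ⟨k.1, k.2, hk k (sle_refl' T k.1)⟩
  · intro hU I r _ xi x hsc hx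
    obtain ⟨D, hD, hlb, hc⟩ := hsc
    obtain ⟨d, hdD, hdU⟩ := hU D x hD hc hx
    obtain ⟨k, hk⟩ := hlb d hdD
    exact ⟨k, fun i hi => dtop_upper hU hdU (hk i hi)⟩

lemma wb_le {d w e : X} (h1 : sle T d w) (h2 : WayBelow T w e) : WayBelow T d e := by
  intro D hD hc
  obtain ⟨p, hp, hwp⟩ := h2 D hD hc
  exact ⟨p, hp, sle_trans' h1 hwp⟩

lemma le_wb {w e e3 : X} (h1 : WayBelow T w e) (h2 : sle T e e3) : WayBelow T w e3 := by
  intro D hD hc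
  exact h1 D hD (fun U hU heU => hc U hU (h2 U hU heU))

lemma sle_of_wb {d z : X} (h : WayBelow T d z) : sle T d z := by
  obtain ⟨p, hp, hdp⟩ := h {z} (isdir_singleton T z) (fun U hU hz => ⟨z, rfl, hz⟩)
  simp only [Set.mem_singleton_iff] at hp
  subst hp; exact hdp

lemma interp (hc : IsContinuousT T) {d x : X} (h : WayBelow T d x) :
    ∃ e, WayBelow T d e ∧ WayBelow T e x := by
  set D' : Set X := {w | ∃ e, WayBelow T w e ∧ WayBelow T e x} with hD'def
  have hne : D'.Nonempty := by
    obtain ⟨e, he⟩ := (hc.2 x).1.1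
    obtain ⟨w, hw⟩ := (hc.2 e).1.1
    exact ⟨w, e, hw, he⟩
  have hdir : DirectedOn (sle T) D' := by
    rintro w1 ⟨e1, hw1, he1⟩ w2 ⟨e2, hw2, he2⟩
    obtain ⟨e3, he3, h13, h23⟩ := (hc.2 x).1.2 e1 he1 e2 he2
    have hw1' : WayBelow T w1 e3 := le_wb hw1 h13
    have hw2' : WayBelow T w2 e3 := le_wb hw2 h23
    obtain ⟨u1, hu1, hwu1⟩ := hw1' _ (hc.2 e3).1 (hc.2 e3).2
    obtain ⟨u2, hu2, hwu2⟩ := hw2' _ (hc.2 e3).1 (hc.2 e3).2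
    obtain ⟨u, hu, h1u, h2u⟩ := (hc.2 e3).1.2 u1 hu1 u2 hu2
    exact ⟨u, ⟨e3, hu, he3⟩, sle_trans' hwu1 h1u, sle_trans' hwu2 h2u⟩
  have hconv : DConv T D' x := by
    intro U hU hx
    obtain ⟨e, he, heU⟩ := (hc.2 x).2 U hU hx
    obtain ⟨w, hw, hwU⟩ := (hc.2 e).2 U hU heU
    exact ⟨w, ⟨e, hw, he⟩, hwU⟩
  obtain ⟨w, ⟨e, hwe, hex⟩, hdw⟩ := h D' ⟨hne, hdir⟩ hconv
  exact ⟨e, wb_le hdw hwe, hex⟩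

lemma wbset_dtop (hc : IsContinuousT T) (d : X) : {z | WayBelow T d z} ∈ DTop T := by
  intro D x hD hcv hx
  obtain ⟨e, hde, hex⟩ := interp hc hx
  obtain ⟨p, hp, hep⟩ := hex D hD hcv
  exact ⟨p, hp, le_wb hde hep⟩

lemma evlb_of_nconv (hc : IsContinuousT T) {I : Type} {r : I → I → Prop} {xi : I → X}
    {x d : X} (h : NConv T r xi x) (hd : WayBelow T d x) : EvLB T r xi d := by
  obtain ⟨k, hk⟩ := h _ (hc.1 _ (wbset_dtop hc d)) hd
  exact ⟨k, fun i hi => sle_of_wb (hk i hi)⟩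

lemma sopen_set_eq (T : Set (Set X)) : {U : Set X | SOpen T U} = DTop T :=
  Set.ext fun _ => sopen_iff

end Helpers

theorem stmt10 (X : Type) [TopologicalSpace X] [T0Space X] :
    (∀ (I : Type) (r : I → I → Prop) (xi : I → X) (x : X),
      SConv (opens X) r xi x ↔ SConv (DTop (opens X)) r xi x) ∧
    ((∀ (I : Type) (r : I → I → Prop), DirIdx r → ∀ (xi : I → X) (x : X),
        SConv (opens X) r xi x ↔ NConv {U | SOpen (opens X) U} r xi x) ↔
      IsContinuousT (DTop (opens X))) := by
  constructor
  · intro I r xi x; exact sconv_dtop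
  · simp only [sopen_set_eq]
    constructor
    · intro hL
      refine ⟨dirt_dtop, fun x => ?_⟩
      let Idx := {p : Set X × X // p.1 ∈ DTop (opens X) ∧ x ∈ p.1 ∧ p.2 ∈ p.1}
      let r : Idx → Idx → Prop := fun p q => q.1.1 ⊆ p.1.1
      let xi : Idx → X := fun p => p.1.2
      have hdir : DirIdx r := by
        refine ⟨⟨⟨(Set.univ, x), univ_dtop, trivial, trivial⟩⟩, fun i => subset_rfl,
          fun a b c hab hbc => hbc.trans hab, fun a b => ?_⟩
        exact ⟨⟨(a.1.1 ∩ b.1.1, x), inter_dtop a.2.1 b.2.1, ⟨a.2.2.1, b.2.2.1⟩,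
          ⟨a.2.2.1, b.2.2.1⟩⟩, Set.inter_subset_left, Set.inter_subset_right⟩
      have hn : NConv (DTop (opens X)) r xi x := by
        intro U hU hx
        exact ⟨⟨(U, x), hU, hx, hx⟩, fun i hi => hi i.2.2.2⟩
      obtain ⟨D, hD, hlb, hcv⟩ := (hL Idx r hdir xi x).mpr hn
      have hDwb : ∀ d ∈ D, WayBelow (DTop (opens X)) d x := by
        intro d hd E hE hEx
        obtain ⟨k, hk⟩ := hlb d hd
        obtain ⟨e, heE, heU⟩ := hEx k.1.1 k.2.1 k.2.2.1
        refine ⟨e, heE, sle_dtop.mpr ?_⟩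
        exact hk ⟨(k.1.1, e), k.2.1, k.2.2.1, heU⟩ subset_rfl
      have hD' : IsDirSet (DTop (opens X)) D := isdir_dtop.mpr hD
      have hcv' : DConv (DTop (opens X)) D x := (dconv_dtop hD).mpr hcv
      constructor
      · constructor
        · obtain ⟨d, hd⟩ := hD.1
          exact ⟨d, hDwb d hd⟩
        · intro y1 hy1 y2 hy2
          obtain ⟨d1, hd1, h1⟩ := hy1 D hD' hcv'
          obtain ⟨d2, hd2, h2⟩ := hy2 D hD' hcv'
          obtain ⟨d, hd, hd1d, hd2d⟩ := hD.2 d1 hd1 d2 hd2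
          exact ⟨d, hDwb d hd, sle_trans' h1 (sle_dtop.mpr hd1d),
            sle_trans' h2 (sle_dtop.mpr hd2d)⟩
      · intro U hU hx
        obtain ⟨d, hd, hdU⟩ := hcv' U hU hx
        exact ⟨d, hDwb d hd, hdU⟩
    · intro hc I r hdir xi x
      constructor
      · intro hsc U hU hx
        exact (sopen_iff.mpr hU) I r hdir xi x hsc hx
      · intro hn
        refine sconv_dtop.mpr ⟨{y | WayBelow (DTop (opens X)) y x}, (hc.2 x).1, ?_, (hc.2 x).2⟩
        intro d hd
        exact evlb_of_nconv hc hn hd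

end Conv
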